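/- Symmetry pullback: let E(σ) = Tr_A[U (σ ⊗ |0⟩⟨0|_A) U†] be a quantum channel given in Stinespring dilated form with U unitary on H_Q ⊗ H_A. If ρ is a density matrix on H_Q and g is a unitary on H_Q with g E(ρ) = λ E(ρ) for unit-modulus λ, then U† (g ⊗ 1_A) U (ρ ⊗ |0⟩⟨0|_A) = λ (ρ ⊗ |0⟩⟨0|_A). -/

import Mathlib

/-!
Put `σ = U (ρ ⊗ |v⟩⟨v|) U†` and `M = g ⊗ 1`. Taking traces in the symmetry hypothesis gives
`Tr (M σ) = λ Tr σ`. For an isometry `M` and `σ = Y Y†`, this saturates Cauchy–Schwarz: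
`‖M Y - λ Y‖₂² = Tr σ - 2 Re (λ̄ Tr (M σ)) + Tr σ = 0`, so `M σ = λ σ`, and conjugating back by
`U` gives the claim.
-/

open scoped ComplexOrder
open Kronecker Matrix

/-- Partial trace over the second tensor factor (the ancilla). -/
noncomputable def ptraceRight {m m' : Type*} [Fintype m'] (ρ : Matrix (m × m') (m × m') ℂ) :
    Matrix m m ℂ :=
  Matrix.of fun a b => ∑ x : m', ρ (a, x) (b, x)

/-- The outer product |v⟩⟨v|. -/
noncomputable def outer {n : Type*} (v : n → ℂ) : Matrix n n ℂ :=
  Matrix.vecMulVec v (star v)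

namespace Matrix

variable {𝕜 : Type*} [RCLike 𝕜] {m n : Type*} [Fintype m] [DecidableEq m] [Fintype n]

theorem mul_eq_smul_of_trace_mul_mul_conjTranspose {M : Matrix m m 𝕜} (hM : Mᴴ * M = 1)
    {Y : Matrix m n 𝕜} {lam : 𝕜} (hlam : ‖lam‖ = 1)
    (htr : (M * (Y * Yᴴ)).trace = lam * (Y * Yᴴ).trace) : M * Y = lam • Y := by
  have hconj : star lam * lam = 1 := by
    rw [RCLike.star_def, RCLike.conj_mul, hlam]; simp
  have hreal : star (Y * Yᴴ).trace = (Y * Yᴴ).trace := by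
    rw [← trace_conjTranspose, conjTranspose_mul, conjTranspose_conjTranspose]
  have h₁ : (Yᴴ * (M * Y)).trace = lam * (Y * Yᴴ).trace := by
    rw [← trace_mul_cycle', htr]
  have h₂ : (Yᴴ * (Mᴴ * Y)).trace = star lam * (Y * Yᴴ).trace := by
    rw [show Yᴴ * (Mᴴ * Y) = (Yᴴ * (M * Y))ᴴ by simp [Matrix.mul_assoc], trace_conjTranspose, h₁,
      star_mul', hreal]
  have h₃ : (Yᴴ * (Mᴴ * (M * Y))).trace = (Y * Yᴴ).trace := by
    rw [← Matrix.mul_assoc Mᴴ, hM, Matrix.one_mul, trace_mul_comm]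
  have h₄ : (Yᴴ * Y).trace = (Y * Yᴴ).trace := trace_mul_comm _ _
  rw [← sub_eq_zero, ← trace_conjTranspose_mul_self_eq_zero_iff]
  simp only [conjTranspose_sub, conjTranspose_mul, conjTranspose_smul, Matrix.sub_mul,
    Matrix.mul_sub, Matrix.smul_mul, Matrix.mul_smul, trace_sub, trace_smul, smul_eq_mul,
    Matrix.mul_assoc, h₁, h₂, h₃, h₄]
  linear_combination (-(Y * Yᴴ).trace) * hconj

theorem PosSemidef.mul_eq_smul_of_trace_mul_eq {M σ : Matrix m m 𝕜} (hσ : σ.PosSemidef)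
    (hM : Mᴴ * M = 1) {lam : 𝕜} (hlam : ‖lam‖ = 1) (htr : (M * σ).trace = lam * σ.trace) :
    M * σ = lam • σ := by
  open MatrixOrder in
  obtain ⟨S, rfl⟩ := CStarAlgebra.nonneg_iff_eq_star_mul_self.mp hσ.nonneg
  rw [star_eq_conjTranspose] at htr ⊢
  have hS : M * Sᴴ = lam • Sᴴ := mul_eq_smul_of_trace_mul_mul_conjTranspose hM hlam
    (by rwa [conjTranspose_conjTranspose])
  rw [← Matrix.mul_assoc, hS, Matrix.smul_mul]

end Matrix

section PartialTrace

variable {nQ nA : Type*} [Fintype nQ] [Fintype nA]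

theorem trace_ptraceRight (ρ : Matrix (nQ × nA) (nQ × nA) ℂ) :
    (ptraceRight ρ).trace = ρ.trace := by
  simp [ptraceRight, Matrix.trace, Fintype.sum_prod_type]

theorem trace_kronecker_one_mul [DecidableEq nA] (g : Matrix nQ nQ ℂ)
    (ρ : Matrix (nQ × nA) (nQ × nA) ℂ) :
    ((g ⊗ₖ (1 : Matrix nA nA ℂ)) * ρ).trace = (g * ptraceRight ρ).trace := by
  simp only [Matrix.trace, Matrix.diag, Matrix.mul_apply, ptraceRight, Matrix.of_apply,
    Matrix.kroneckerMap_apply, Fintype.sum_prod_type, Matrix.one_apply, mul_ite, mul_one,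
    mul_zero, ite_mul, zero_mul, Finset.sum_ite_eq, Finset.mem_univ, if_true, Finset.mul_sum]
  exact Finset.sum_congr rfl fun x _ => Finset.sum_comm

end PartialTrace

theorem symmetry_pullback_general {nQ nA : Type*} [Fintype nQ] [DecidableEq nQ]
    [Fintype nA] [DecidableEq nA]
    (U : Matrix (nQ × nA) (nQ × nA) ℂ) (hU : U ∈ Matrix.unitaryGroup (nQ × nA) ℂ)
    (v : nA → ℂ)
    (ρ : Matrix nQ nQ ℂ) (hρ : ρ.PosSemidef ∧ ρ.trace = 1)
    (g : Matrix nQ nQ ℂ) (hg : g ∈ Matrix.unitaryGroup nQ ℂ)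
    (lam : ℂ) (hlam : ‖lam‖ = 1)
    (hsym : g * ptraceRight (U * (ρ ⊗ₖ outer v) * Uᴴ)
          = lam • ptraceRight (U * (ρ ⊗ₖ outer v) * Uᴴ)) :
    Uᴴ * (g ⊗ₖ (1 : Matrix nA nA ℂ)) * U * (ρ ⊗ₖ outer v)
      = lam • (ρ ⊗ₖ outer v) := by
  set P := ρ ⊗ₖ outer v
  set M := g ⊗ₖ (1 : Matrix nA nA ℂ)
  have hUU : Uᴴ * U = 1 := hU.1
  have hMM : Mᴴ * M = 1 := (kronecker_mem_unitary hg (one_mem _)).1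
  have hσ : (U * P * Uᴴ).PosSemidef :=
    (hρ.1.kronecker (posSemidef_vecMulVec_self_star v)).mul_mul_conjTranspose_same U
  have hMσ : M * (U * P * Uᴴ) = lam • (U * P * Uᴴ) := hσ.mul_eq_smul_of_trace_mul_eq hMM hlam <| by
    rw [trace_kronecker_one_mul, hsym, trace_smul, trace_ptraceRight, smul_eq_mul]
  calc Uᴴ * M * U * P = Uᴴ * (M * (U * P * Uᴴ)) * U := by
        simp only [Matrix.mul_assoc, hUU, Matrix.mul_one]
    _ = lam • (Uᴴ * U * P * (Uᴴ * U)) := by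
        rw [hMσ, Matrix.mul_smul, Matrix.smul_mul]; simp only [Matrix.mul_assoc]
    _ = lam • P := by rw [hUU, Matrix.one_mul, Matrix.mul_one]

/-- symmetry pullback through a Stinespring-dilated channel
E(σ) = Tr_A[U (σ ⊗ |0⟩⟨0|_A) U†]. -/
theorem symmetry_pullback {nQ nA : Type*} [Fintype nQ] [DecidableEq nQ]
    [Fintype nA] [DecidableEq nA]
    (U : Matrix (nQ × nA) (nQ × nA) ℂ) (hU : U ∈ Matrix.unitaryGroup (nQ × nA) ℂ)
    (v : nA → ℂ) (hv : star v ⬝ᵥ v = 1)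
    (ρ : Matrix nQ nQ ℂ) (hρ : ρ.PosSemidef ∧ ρ.trace = 1)
    (g : Matrix nQ nQ ℂ) (hg : g ∈ Matrix.unitaryGroup nQ ℂ)
    (lam : ℂ) (hlam : ‖lam‖ = 1)
    (hsym : g * ptraceRight (U * (ρ ⊗ₖ outer v) * Uᴴ)
          = lam • ptraceRight (U * (ρ ⊗ₖ outer v) * Uᴴ)) :
    Uᴴ * (g ⊗ₖ (1 : Matrix nA nA ℂ)) * U * (ρ ⊗ₖ outer v)
      = lam • (ρ ⊗ₖ outer v) :=
  symmetry_pullback_general U hU v ρ hρ g hg lam hlam hsym
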